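/- A periodic tiling exists for any convex pentagon of 'type 1', i.e., any convex pentagon whose angles satisfy D + E = π (two adjacent angles supplementary): such a pentagon tiles the plane periodically. Abstract version: if a convex pentagon ABCDE has D + E = π, then two copies (one rotated by π) fit together to form a hexagon with opposite sides parallel and equal, which tiles the plane by translations. -/

import Mathlib

open EuclideanGeometry Real Set

/-- A convex pentagon in the Euclidean plane: five vertices listed in
counterclockwise cyclic order, with a strict left turn at every vertex. -/
structure ConvexPentagon where
  v : Fin 5 → EuclideanSpace ℝ (Fin 2)
  convex : ∀ i : Fin 5,
    0 < (v (i + 1) - v i) 0 * (v (i + 2) - v (i + 1)) 1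
        - (v (i + 1) - v i) 1 * (v (i + 2) - v (i + 1)) 0

/-- The interior angle of a convex pentagon at vertex `i`. -/
noncomputable def ConvexPentagon.interiorAngle (P : ConvexPentagon) (i : Fin 5) : ℝ :=
  EuclideanGeometry.angle (P.v (i - 1)) (P.v i) (P.v (i + 1))

/-- The closed pentagonal region: the convex hull of the five vertices. -/
noncomputable def ConvexPentagon.region (P : ConvexPentagon) :
    Set (EuclideanSpace ℝ (Fin 2)) :=
  convexHull ℝ (Set.range P.v)

/-!
Write `A B C D E` for the vertices and `σ y = D + E - y` for the half-turn about the midpoint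
of `DE`. Since `D + E = π`, the sides `CD` and `AE` are parallel and point the same way, so `σ`
maps `C` onto the line `EA` and `A` onto the line `CD`: the pentagon and its image under `σ`
form the centrally symmetric hexagon `A B C (σ A) (σ B) (σ C)`, cut in two by the diagonal `DE`.
This hexagon tiles the plane by the translations of the lattice spanned by `σ A - B` and
`σ C - B`.

Everything except the final isometries is affine, so the argument is run in the affine frame
with origin `A` and basis `σ A - B`, `σ C - B`, where the lattice is `ℤ²`. There the hexagon is
an intersection of three strips, a nonzero lattice vector moves one strip off itself, and the
unit square is covered by the hexagon and its translates by `(0, 1)` and `(-1, 1)`.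
-/

noncomputable section

local notation "ℝ²" => EuclideanSpace ℝ (Fin 2)

namespace AffineMap

variable {k V W : Type*} [Ring k] [AddCommGroup V] [Module k V] [AddCommGroup W] [Module k W]

theorem image_image_add (f : V →ᵃ[k] W) (s : Set V) (z : V) :
    f '' ((· + z) '' s) = (· + f.linear z) '' (f '' s) := by
  simp only [image_image]
  refine image_congr fun x _ => ?_
  rw [add_comm x, add_comm _ (f.linear z)]
  exact f.map_vadd x z

theorem image_image_add_sub (f : V →ᵃ[k] W) (s : Set V) (a b : V) :
    f '' ((a + b - ·) '' s) = (f a + f b - ·) '' (f '' s) := by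
  simp only [image_image]
  refine image_congr fun x _ => ?_
  have hf : ∀ y, f y = f.linear y + f 0 := fun y => congrFun f.decomp y
  rw [hf, hf a, hf b, hf x, map_sub, map_add]
  abel

theorem image_add_mem_image (f : V →ᵃ[k] W) {S : Set (Set V)} {d : V}
    (hS : ∀ T ∈ S, (· + d) '' T ∈ S) :
    ∀ T ∈ (f '' ·) '' S, (· + f.linear d) '' T ∈ (f '' ·) '' S := by
  rintro _ ⟨T, hT, rfl⟩
  exact ⟨_, hS T hT, f.image_image_add T d⟩

end AffineMap

theorem LinearEquiv.linearIndependent_apply_pair {R V : Type*} [Ring R] [AddCommGroup V]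
    [Module R V] (L : (R × R) ≃ₗ[R] V) : LinearIndependent R ![L (1, 0), L (0, 1)] := by
  refine LinearIndependent.pair_iff.mpr fun s t h => ?_
  have h' : L (s, t) = 0 := by
    rw [show ((s, t) : R × R) = s • (1, 0) + t • (0, 1) by simp, map_add, map_smul, map_smul, h]
  simpa using L.injective (h'.trans (map_zero L).symm)

namespace TypeOnePentagon

open Function Topology

section Tiling

variable {X Y : Type*} [TopologicalSpace X] [TopologicalSpace Y]

def IsTiling (S : Set (Set X)) : Prop :=
  ⋃₀ S = univ ∧ S.Pairwise (Disjoint on interior)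

theorem IsTiling.image {S : Set (Set X)} (hS : IsTiling S) (e : X ≃ₜ Y) :
    IsTiling ((e '' ·) '' S) := by
  refine ⟨eq_univ_of_forall fun y => ?_, ?_⟩
  · obtain ⟨T, hT, hy⟩ := mem_sUnion.mp (hS.1.symm ▸ mem_univ (e.symm y))
    exact ⟨e '' T, mem_image_of_mem _ hT, e.symm y, hy, e.apply_symm_apply y⟩
  · rintro _ ⟨T₁, h₁, rfl⟩ _ ⟨T₂, h₂, rfl⟩ hne
    have hT : T₁ ≠ T₂ := fun h => hne (h ▸ rfl)
    simp only [onFun, ← e.image_interior]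
    exact (disjoint_image_iff e.injective).mpr (hS.2 h₁ h₂ hT)

end Tiling

section Lattice

variable {E : Type*} [AddCommGroup E]

def latticeTiles (Λ : AddSubgroup E) (F : Set (Set E)) : Set (Set E) :=
  {T | ∃ X ∈ F, ∃ z ∈ Λ, T = (· + z) '' X}

theorem image_add_mem_latticeTiles {Λ : AddSubgroup E} {F : Set (Set E)} {d : E} (hd : d ∈ Λ)
    {T : Set E} (hT : T ∈ latticeTiles Λ F) : (· + d) '' T ∈ latticeTiles Λ F := by
  obtain ⟨X, hX, z, hz, rfl⟩ := hT
  exact ⟨X, hX, z + d, Λ.add_mem hz hd, by simp only [image_image, add_assoc]⟩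

variable [TopologicalSpace E] [IsTopologicalAddGroup E]

theorem disjoint_interior_image_add {s t : Set E} {z₁ z₂ : E}
    (h : Disjoint (interior s) (interior ((· + (z₂ - z₁)) '' t))) :
    Disjoint (interior ((· + z₁) '' s)) (interior ((· + z₂) '' t)) := by
  have ht : (· + z₂) '' t = (· + z₁) '' ((· + (z₂ - z₁)) '' t) := by
    simp only [image_image, add_assoc, sub_add_cancel]
  rw [ht, show (· + z₁) = ⇑(Homeomorph.addRight z₁) from rfl, ← Homeomorph.image_interior,
    ← Homeomorph.image_interior]
  exact (disjoint_image_iff (Homeomorph.addRight z₁).injective).mpr h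

theorem isTiling_latticeTiles {Λ : AddSubgroup E} {F : Set (Set E)}
    (hcover : ∀ x, ∃ z ∈ Λ, x - z ∈ ⋃₀ F) (hF : F.Pairwise (Disjoint on interior))
    (hΛ : ∀ X ∈ F, ∀ Y ∈ F, ∀ z ∈ Λ, z ≠ 0 → Disjoint (interior X) (interior ((· + z) '' Y))) :
    IsTiling (latticeTiles Λ F) := by
  refine ⟨eq_univ_of_forall fun x => ?_, ?_⟩
  · obtain ⟨z, hz, X, hX, hx⟩ := hcover x
    exact ⟨_, ⟨X, hX, z, hz, rfl⟩, x - z, hx, sub_add_cancel x z⟩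
  · rintro _ ⟨X₁, h₁, z₁, hz₁, rfl⟩ _ ⟨X₂, h₂, z₂, hz₂, rfl⟩ hne
    apply disjoint_interior_image_add
    by_cases hz : z₂ - z₁ = 0
    · have hX : X₁ ≠ X₂ := by rintro rfl; exact hne (by rw [sub_eq_zero.mp hz])
      simpa [hz] using hF h₁ h₂ hX
    · exact hΛ X₁ h₁ X₂ h₂ _ (Λ.sub_mem hz₂ hz₁) hz

end Lattice

section Separation

variable {V : Type*} [AddCommGroup V] [Module ℝ V] [TopologicalSpace V] [ContinuousAdd V]
  [ContinuousSMul ℝ V]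

theorem disjoint_interior_of_forall_le_of_forall_ge (g : V →L[ℝ] ℝ) (hg : g ≠ 0)
    {s t : Set V} {c : ℝ} (hs : ∀ x ∈ s, g x ≤ c) (ht : ∀ x ∈ t, c ≤ g x) :
    Disjoint (interior s) (interior t) := by
  obtain ⟨v, hv⟩ := DFunLike.ne_iff.mp hg
  refine disjoint_left.mpr fun x hxs hxt => hv ?_
  have hc : ∀ y ∈ interior s ∩ interior t, g y = c := fun y hy =>
    le_antisymm (hs y (interior_subset hy.1)) (ht y (interior_subset hy.2))
  have hline : ∀ᶠ r : ℝ in 𝓝[≠] 0, x + r • v ∈ interior s ∩ interior t :=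
    nhdsWithin_le_nhds <| ContinuousAt.preimage_mem_nhds (by fun_prop) <| by
      simpa using (isOpen_interior.inter isOpen_interior).mem_nhds ⟨hxs, hxt⟩
  obtain ⟨r, hr, hr₀⟩ := (hline.and self_mem_nhdsWithin).exists
  have h := hc _ hr
  rw [map_add, map_smul, smul_eq_mul, hc x ⟨hxs, hxt⟩] at h
  exact (mul_eq_zero.mp (by linarith)).resolve_left hr₀

theorem disjoint_interior_image_add_of_mapsTo_Icc (g : V →L[ℝ] ℝ) (hg : g ≠ 0)
    {s t : Set V} {a b : ℝ} (hs : ∀ x ∈ s, g x ∈ Icc a b) (ht : ∀ x ∈ t, g x ∈ Icc a b)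
    {z : V} (hz : b - a ≤ |g z|) : Disjoint (interior s) (interior ((· + z) '' t)) := by
  have ht' : ∀ y ∈ (· + z) '' t, g y ∈ Icc (a + g z) (b + g z) := by
    rintro _ ⟨x, hx, rfl⟩
    rw [map_add]
    exact ⟨by linarith [(ht x hx).1], by linarith [(ht x hx).2]⟩
  rcases le_abs'.mp hz with hz | hz
  · exact (disjoint_interior_of_forall_le_of_forall_ge g hg (c := a)
      (fun y hy => (ht' y hy).2.trans (by linarith)) (fun x hx => (hs x hx).1)).symm
  · exact disjoint_interior_of_forall_le_of_forall_ge g hg (c := b)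
      (fun x hx => (hs x hx).2) (fun y hy => le_trans (by linarith) (ht' y hy).1)

end Separation

section Plane

open InnerProductGeometry

def cross : ℝ² →ₗ[ℝ] ℝ² →ₗ[ℝ] ℝ :=
  LinearMap.mk₂ ℝ (fun x y => x 0 * y 1 - x 1 * y 0)
    (fun _ _ _ => by simp only [PiLp.add_apply]; ring)
    (fun _ _ _ => by simp only [PiLp.smul_apply, smul_eq_mul]; ring)
    (fun _ _ _ => by simp only [PiLp.add_apply]; ring)
    (fun _ _ _ => by simp only [PiLp.smul_apply, smul_eq_mul]; ring)

theorem cross_apply (x y : ℝ²) : cross x y = x 0 * y 1 - x 1 * y 0 := rfl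

theorem cross_smul_add_cross_smul (x y z : ℝ²) :
    cross x y • z = cross z y • x + cross x z • y := by
  ext i
  fin_cases i <;>
    simp only [cross_apply, Fin.zero_eta, Fin.mk_one, PiLp.smul_apply, smul_eq_mul,
      PiLp.add_apply] <;>
    ring

theorem inner_eq_mul_add_mul (x y : ℝ²) : inner ℝ x y = x 0 * y 0 + x 1 * y 1 := by
  simp [PiLp.inner_apply, Fin.sum_univ_two, mul_comm]

theorem cross_sq_add_inner_sq (x y : ℝ²) :
    cross x y ^ 2 + inner ℝ x y ^ 2 = (‖x‖ * ‖y‖) ^ 2 := by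
  rw [mul_pow, ← real_inner_self_eq_norm_sq, ← real_inner_self_eq_norm_sq, inner_eq_mul_add_mul,
    inner_eq_mul_add_mul, inner_eq_mul_add_mul, cross_apply]
  ring

theorem cross_eq_sin_angle_mul {x y : ℝ²} (h : 0 ≤ cross x y) :
    cross x y = Real.sin (InnerProductGeometry.angle x y) * (‖x‖ * ‖y‖) := by
  have hsin : 0 ≤ Real.sin (InnerProductGeometry.angle x y) * (‖x‖ * ‖y‖) := by
    have := sin_angle_nonneg x y
    positivity
  refine (sq_eq_sq₀ h hsin).mp ?_
  linear_combination cross_sq_add_inner_sq x y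
    - (‖x‖ * ‖y‖) ^ 2 * Real.sin_sq_add_cos_sq (InnerProductGeometry.angle x y)
    + (inner ℝ x y + Real.cos (InnerProductGeometry.angle x y) * (‖x‖ * ‖y‖))
      * cos_angle_mul_norm_mul_norm x y

theorem eq_of_inner_eq_of_cross_eq {u x y : ℝ²} (hu : u ≠ 0) (h₁ : inner ℝ u x = inner ℝ u y)
    (h₂ : cross u x = cross u y) : x = y := by
  have hn : u 0 ^ 2 + u 1 ^ 2 ≠ 0 := by
    rw [show u 0 ^ 2 + u 1 ^ 2 = ‖u‖ ^ 2 by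
      rw [← real_inner_self_eq_norm_sq, inner_eq_mul_add_mul]; ring]
    exact pow_ne_zero 2 (norm_ne_zero_iff.mpr hu)
  rw [inner_eq_mul_add_mul, inner_eq_mul_add_mul] at h₁
  rw [cross_apply, cross_apply] at h₂
  ext i; fin_cases i
  · show x 0 = y 0
    exact mul_left_cancel₀ hn (by linear_combination u 0 * h₁ - u 1 * h₂)
  · show x 1 = y 1
    exact mul_left_cancel₀ hn (by linear_combination u 1 * h₁ + u 0 * h₂)

theorem exists_pos_smul_of_angle_eq {u v w : ℝ²}
    (h : InnerProductGeometry.angle u v = InnerProductGeometry.angle u w)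
    (hv : 0 < cross u v) (hw : 0 < cross u w) : ∃ s : ℝ, 0 < s ∧ w = s • v := by
  have hu : u ≠ 0 := by rintro rfl; simp at hv
  have hv₀ : 0 < ‖v‖ := norm_pos_iff.mpr (by rintro rfl; simp at hv)
  have hw₀ : 0 < ‖w‖ := norm_pos_iff.mpr (by rintro rfl; simp at hw)
  refine ⟨‖w‖ / ‖v‖, by positivity, eq_of_inner_eq_of_cross_eq hu ?_ ?_⟩
  · rw [inner_smul_right, ← cos_angle_mul_norm_mul_norm, ← cos_angle_mul_norm_mul_norm, h]
    field_simp
  · rw [map_smul, smul_eq_mul, cross_eq_sin_angle_mul hw.le, cross_eq_sin_angle_mul hv.le, h]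
    field_simp

theorem exists_affineEquiv_eq_add_smul (A : ℝ²) {t₁ t₂ : ℝ²} (h : cross t₁ t₂ ≠ 0) :
    ∃ Φ : ℝ × ℝ ≃ᵃ[ℝ] ℝ², ∀ p, Φ p = A + (p.1 • t₁ + p.2 • t₂) := by
  let L : ℝ × ℝ →ₗ[ℝ] ℝ² :=
    (LinearMap.fst ℝ ℝ ℝ).smulRight t₁ + (LinearMap.snd ℝ ℝ ℝ).smulRight t₂
  have hL : ∀ p, L p = p.1 • t₁ + p.2 • t₂ := fun p => rfl
  have hsurj : Surjective L := fun y =>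
    ⟨((cross t₁ t₂)⁻¹ * cross y t₂, (cross t₁ t₂)⁻¹ * cross t₁ y), by
      rw [hL, mul_smul, mul_smul, ← smul_add, ← cross_smul_add_cross_smul, smul_smul,
        inv_mul_cancel₀ h, one_smul]⟩
  have hbij : Bijective L :=
    ⟨(LinearMap.injective_iff_surjective_of_finrank_eq_finrank (by simp)).mpr hsurj, hsurj⟩
  exact ⟨(LinearEquiv.ofBijective L hbij).toAffineEquiv.trans (AffineEquiv.constVAdd ℝ ℝ² A),
    fun p => rfl⟩

end Plane

section Det

def det (u : ℝ × ℝ) : ℝ × ℝ →L[ℝ] ℝ :=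
  u.1 • ContinuousLinearMap.snd ℝ ℝ ℝ - u.2 • ContinuousLinearMap.fst ℝ ℝ ℝ

@[simp] theorem det_apply (u p : ℝ × ℝ) : det u p = u.1 * p.2 - u.2 * p.1 := rfl

theorem det_ne_zero {u : ℝ × ℝ} (hu : u ≠ 0) : det u ≠ 0 := by
  obtain ⟨a, b⟩ := u
  intro h
  have h₁ : det (a, b) (0, 1) = 0 := by rw [h]; rfl
  have h₂ : det (a, b) (1, 0) = 0 := by rw [h]; rfl
  simp only [det_apply] at h₁ h₂
  exact hu (Prod.mk_eq_zero.mpr ⟨by linarith, by linarith⟩)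

theorem det_sub_sub_swap (x y p : ℝ × ℝ) : det (x - y) (p - y) = -det (y - x) (p - x) := by
  simp only [det_apply, Prod.fst_sub, Prod.snd_sub]
  ring

theorem det_sub_add_sub (x y p : ℝ × ℝ) :
    det (y - x) (x + y - p) = 2 * det (y - x) x - det (y - x) p := by
  simp only [det_apply, Prod.fst_sub, Prod.snd_sub, Prod.fst_add, Prod.snd_add]
  ring

theorem mem_convexHull_triangle {x y z p : ℝ × ℝ} (hxyz : 0 < det (y - x) (z - x))
    (hx : 0 ≤ det (y - x) (p - x)) (hy : 0 ≤ det (z - y) (p - y))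
    (hz : 0 ≤ det (x - z) (p - z)) : p ∈ convexHull ℝ {x, y, z} := by
  set Δ := det (y - x) (z - x)
  set a := det (z - y) (p - y) / Δ with ha
  set b := det (x - z) (p - z) / Δ with hb
  set c := det (y - x) (p - x) / Δ with hc
  have hsum : a + b + c = 1 := by
    rw [ha, hb, hc, ← add_div, ← add_div, div_eq_one_iff_eq hxyz.ne']
    simp only [Δ, det_apply, Prod.fst_sub, Prod.snd_sub]
    ring
  have hp : a • x + b • y + c • z = p := by
    ext <;> simp only [ha, hb, hc, Prod.fst_add, Prod.snd_add, Prod.smul_fst, Prod.smul_snd,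
      smul_eq_mul] <;> field_simp <;> simp only [Δ, det_apply, Prod.fst_sub, Prod.snd_sub] <;> ring
  have hmem := (convex_convexHull ℝ {x, y, z}).sum_mem (t := Finset.univ) (w := ![a, b, c])
    (z := ![x, y, z]) (fun i _ => by
      fin_cases i <;>
        simp only [Fin.zero_eta, Fin.mk_one, Fin.reduceFinMk, Matrix.cons_val, Matrix.cons_val_zero,
          Matrix.cons_val_one] <;>
        positivity)
    (by simpa [Fin.sum_univ_three] using hsum)
    (fun i _ => subset_convexHull ℝ _ (by fin_cases i <;> simp))
  simpa [Fin.sum_univ_three, hp] using hmem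

theorem mem_convexHull_pentagon {v : Fin 5 → ℝ × ℝ} (h₂ : 0 < det (v 1 - v 0) (v 2 - v 0))
    (h₃ : 0 < det (v 2 - v 0) (v 3 - v 0)) (h₄ : 0 < det (v 3 - v 0) (v 4 - v 0)) {p : ℝ × ℝ}
    (hp : ∀ i, 0 ≤ det (v (i + 1) - v i) (p - v i)) : p ∈ convexHull ℝ (range v) := by
  have hfan : ∀ i j k, convexHull ℝ {v i, v j, v k} ⊆ convexHull ℝ (range v) := fun i j k =>
    convexHull_mono (by rintro _ (rfl | rfl | rfl) <;> exact mem_range_self _)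
  rcases le_total (det (v 2 - v 0) (p - v 0)) 0 with h | h
  · exact hfan 0 1 2 <|
      mem_convexHull_triangle h₂ (hp 0) (hp 1) (by rw [det_sub_sub_swap]; linarith)
  rcases le_total (det (v 3 - v 0) (p - v 0)) 0 with h' | h'
  · exact hfan 0 2 3 <|
      mem_convexHull_triangle h₃ h (hp 2) (by rw [det_sub_sub_swap]; linarith)
  · exact hfan 0 3 4 (mem_convexHull_triangle h₄ h' (hp 3) (hp 4))

end Det

def integerLattice : AddSubgroup (ℝ × ℝ) :=
  (Int.castAddHom ℝ).range.prod (Int.castAddHom ℝ).range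

theorem mem_integerLattice {z : ℝ × ℝ} :
    z ∈ integerLattice ↔ ∃ m n : ℤ, ((m : ℝ), (n : ℝ)) = z := by
  simp only [integerLattice, AddSubgroup.mem_prod, AddMonoidHom.mem_range, Int.coe_castAddHom]
  constructor
  · rintro ⟨⟨m, hm⟩, ⟨n, hn⟩⟩
    exact ⟨m, n, Prod.ext hm hn⟩
  · rintro ⟨m, n, rfl⟩
    exact ⟨⟨m, rfl⟩, ⟨n, rfl⟩⟩

/-- A type 1 pentagon in the affine frame with origin `A` and basis `σ A - B`, `σ C - B`, where
`σ` is the half-turn about the midpoint of `DE`: `(α, β)` are the coordinates of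
`(D - C) + (E - A)`, and `μ = |CD| / (|CD| + |EA|)`. -/
structure Model where
  α : ℝ
  β : ℝ
  μ : ℝ
  α_pos : 0 < α
  β_pos : 0 < β
  α_add_β_lt_one : α + β < 1
  μ_pos : 0 < μ
  μ_lt_one : μ < 1

namespace Model

variable (m : Model)

def vertex : Fin 5 → ℝ × ℝ :=
  ![(0, 0), (m.α, m.β - 1), (1, -1), (1 + m.μ * m.α, m.μ * m.β - 1),
    ((1 - m.μ) * m.α, (1 - m.μ) * m.β)]

def pentagon : Set (ℝ × ℝ) := convexHull ℝ (range m.vertex)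

def rotatedPentagon : Set (ℝ × ℝ) := (m.vertex 3 + m.vertex 4 - ·) '' m.pentagon

/-- The strips between the lines `AB` and `σ A σ B`, `BC` and `σ B σ C`, `CD` and `EA`. -/
def hexagon : Set (ℝ × ℝ) :=
  {p | det (m.α, m.β - 1) p ∈ Icc 0 (1 - m.β) ∧ det (1 - m.α, -m.β) p ∈ Icc (m.α + m.β - 1) m.β ∧
    det (m.α, m.β) p ∈ Icc (-(m.α + m.β)) 0}

def tiles : Set (Set (ℝ × ℝ)) := latticeTiles integerLattice {m.pentagon, m.rotatedPentagon}

local notation "V" => m.vertex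
local notation "W" => m.vertex 4 - m.vertex 3

theorem convex_hexagon : Convex ℝ m.hexagon :=
  ((convex_Icc _ _).linear_preimage (det _).toLinearMap).inter
    (((convex_Icc _ _).linear_preimage (det _).toLinearMap).inter
      ((convex_Icc _ _).linear_preimage (det _).toLinearMap))

theorem vertex_mem_hexagon (i : Fin 5) : V i ∈ m.hexagon := by
  obtain ⟨α, β, μ, hα, hβ, hαβ, hμ₀, hμ₁⟩ := m
  simp only [hexagon, mem_ofPred_eq, mem_Icc, det_apply]
  refine ⟨⟨?_, ?_⟩, ⟨?_, ?_⟩, ?_, ?_⟩ <;> fin_cases i <;>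
    simp only [vertex, Fin.zero_eta, Fin.mk_one, Fin.reduceFinMk, Matrix.cons_val,
      Matrix.cons_val_zero, Matrix.cons_val_one] <;>
    nlinarith [mul_pos hμ₀ hα, mul_pos hμ₀ hβ]

theorem pentagon_subset_hexagon : m.pentagon ⊆ m.hexagon :=
  convexHull_min (range_subset_iff.mpr m.vertex_mem_hexagon) m.convex_hexagon

theorem det_vertex_three_le (i : Fin 5) : det W (V 3) ≤ det W (V i) := by
  obtain ⟨α, β, μ, hα, hβ, hαβ, hμ₀, hμ₁⟩ := m
  fin_cases i <;>
    simp only [vertex, Fin.zero_eta, Fin.mk_one, Fin.reduceFinMk, Matrix.cons_val,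
      Matrix.cons_val_zero, Matrix.cons_val_one, Prod.mk_sub_mk, det_apply] <;>
    nlinarith [mul_pos hμ₀ hα, mul_pos hμ₀ hβ]

theorem pentagon_subset_halfPlane : m.pentagon ⊆ {p | det W (V 3) ≤ det W p} :=
  convexHull_min (range_subset_iff.mpr m.det_vertex_three_le)
    ((convex_Ici _).linear_preimage (det _).toLinearMap)

theorem add_sub_mem_hexagon {p : ℝ × ℝ} (hp : p ∈ m.hexagon) : V 3 + V 4 - p ∈ m.hexagon := by
  simp only [hexagon, mem_ofPred_eq, mem_Icc, det_apply] at hp ⊢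
  simp only [vertex, Matrix.cons_val, Prod.fst_sub, Prod.snd_sub, Prod.fst_add, Prod.snd_add]
  refine ⟨⟨?_, ?_⟩, ⟨?_, ?_⟩, ?_, ?_⟩ <;> nlinarith

theorem mem_pentagon_of_mem_hexagon {p : ℝ × ℝ} (hp : p ∈ m.hexagon)
    (hW : det W (V 3) ≤ det W p) : p ∈ m.pentagon := by
  obtain ⟨α, β, μ, hα, hβ, hαβ, hμ₀, hμ₁⟩ := m
  obtain ⟨⟨h₁, -⟩, ⟨h₂, -⟩, h₃, h₄⟩ := hp
  refine mem_convexHull_pentagon ?_ ?_ ?_ fun i => ?_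
  rotate_left 3
  fin_cases i
  all_goals
    simp only [vertex, Fin.zero_eta, Fin.mk_one, Fin.reduceFinMk, Fin.reduceAdd, Matrix.cons_val,
      Matrix.cons_val_zero, Matrix.cons_val_one, Prod.mk_sub_mk, Prod.fst_sub, Prod.snd_sub,
      det_apply] at h₁ h₂ h₃ h₄ hW ⊢
    nlinarith

theorem hexagon_subset_union : m.hexagon ⊆ m.pentagon ∪ m.rotatedPentagon := by
  intro p hp
  by_cases hW : det W (V 3) ≤ det W p
  · exact Or.inl (m.mem_pentagon_of_mem_hexagon hp hW)
  · refine Or.inr ⟨V 3 + V 4 - p, m.mem_pentagon_of_mem_hexagon (m.add_sub_mem_hexagon hp) ?_,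
      sub_sub_cancel _ p⟩
    rw [det_sub_add_sub]
    linarith

theorem rotatedPentagon_subset :
    m.rotatedPentagon ⊆ m.hexagon ∩ {p | det W p ≤ det W (V 3)} := by
  rintro _ ⟨p, hp, rfl⟩
  refine ⟨m.add_sub_mem_hexagon (m.pentagon_subset_hexagon hp), ?_⟩
  have := m.pentagon_subset_halfPlane hp
  simp only [mem_ofPred_eq, det_sub_add_sub] at this ⊢
  linarith

theorem disjoint_interior_pentagon_rotatedPentagon :
    Disjoint (interior m.pentagon) (interior m.rotatedPentagon) := by
  have hW : W ≠ 0 := by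
    obtain ⟨α, β, μ, hα, hβ, _, _, _⟩ := m
    intro h
    have h₁ := congrArg Prod.fst h
    have h₂ := congrArg Prod.snd h
    simp only [vertex, Matrix.cons_val, Prod.mk_sub_mk, Prod.fst_zero, Prod.snd_zero] at h₁ h₂
    nlinarith
  exact (disjoint_interior_of_forall_le_of_forall_ge (det W) (det_ne_zero hW)
    (fun p hp => (m.rotatedPentagon_subset hp).2) (fun p hp => m.pentagon_subset_halfPlane hp)).symm

theorem mem_hexagon_or_of_mem_Ico {p : ℝ × ℝ} (h₁ : p.1 ∈ Ico 0 1) (h₂ : p.2 ∈ Ico 0 1) :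
    p ∈ m.hexagon ∨ p - (0, 1) ∈ m.hexagon ∨ p - (-1, 1) ∈ m.hexagon := by
  obtain ⟨α, β, _, hα, hβ, hαβ, _, _⟩ := m
  obtain ⟨a, b⟩ := p
  obtain ⟨ha₀, ha₁⟩ := h₁
  obtain ⟨hb₀, hb₁⟩ := h₂
  simp only [hexagon, mem_ofPred_eq, mem_Icc, det_apply, Prod.mk_sub_mk] at *
  rcases le_or_gt (β * a + (1 - α) * b) β with h | h
  · rcases le_or_gt (α * b - β * a) 0 with h' | h'
    · left; refine ⟨⟨?_, ?_⟩, ⟨?_, ?_⟩, ?_, ?_⟩ <;> nlinarith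
    · right; right; refine ⟨⟨?_, ?_⟩, ⟨?_, ?_⟩, ?_, ?_⟩ <;> nlinarith
  · rcases le_or_gt 0 (α * (b - 1) - (β - 1) * a) with h' | h'
    · right; left; refine ⟨⟨?_, ?_⟩, ⟨?_, ?_⟩, ?_, ?_⟩ <;> nlinarith
    · right; right; refine ⟨⟨?_, ?_⟩, ⟨?_, ?_⟩, ?_, ?_⟩ <;> nlinarith

theorem exists_sub_mem_hexagon (x : ℝ × ℝ) : ∃ z ∈ integerLattice, x - z ∈ m.hexagon := by
  set q : ℝ × ℝ := (Int.fract x.1, Int.fract x.2)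
  obtain ⟨k, l, hq⟩ : ∃ k l : ℤ, q - ((k : ℝ), (l : ℝ)) ∈ m.hexagon := by
    rcases m.mem_hexagon_or_of_mem_Ico (p := q) ⟨Int.fract_nonneg _, Int.fract_lt_one _⟩
      ⟨Int.fract_nonneg _, Int.fract_lt_one _⟩ with h | h | h
    · exact ⟨0, 0, by simpa [Prod.mk_zero_zero] using h⟩
    · exact ⟨0, 1, by simpa using h⟩
    · exact ⟨-1, 1, by simpa using h⟩
  refine ⟨_, mem_integerLattice.mpr ⟨⌊x.1⌋ + k, ⌊x.2⌋ + l, rfl⟩, ?_⟩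
  convert hq using 1
  ext <;> simp only [q, Int.fract, Prod.fst_sub, Prod.snd_sub, Int.cast_add] <;> ring

/-- Each nonzero lattice vector moves one of the three strips of `hexagon` off itself. -/
theorem width_le_abs_det_of_ne_zero {k l : ℤ} (h : (k, l) ≠ (0, 0)) :
    1 - m.β ≤ |det (m.α, m.β - 1) (k, l)| ∨ 1 - m.α ≤ |det (1 - m.α, -m.β) (k, l)| ∨
      m.α + m.β ≤ |det (m.α, m.β) (k, l)| := by
  obtain ⟨α, β, _, hα, hβ, hαβ, _, _⟩ := m
  have hZ : ∀ n : ℤ, (n : ℝ) ≤ -1 ∨ (n : ℝ) = 0 ∨ 1 ≤ (n : ℝ) := fun n => by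
    rcases lt_trichotomy n 0 with hn | rfl | hn
    · exact Or.inl (by exact_mod_cast Int.le_sub_one_of_lt hn)
    · simp
    · exact Or.inr (Or.inr (by exact_mod_cast hn))
  simp only [det_apply, le_abs]
  rcases hZ k with hk | hk | hk <;> rcases hZ l with hl | hl | hl
  all_goals first
    | exact absurd (Prod.ext (Int.cast_eq_zero.mp hk) (Int.cast_eq_zero.mp hl)) h
    | exact Or.inl (Or.inl (by nlinarith))
    | exact Or.inl (Or.inr (by nlinarith))
    | exact Or.inr (Or.inl (Or.inl (by nlinarith)))
    | exact Or.inr (Or.inl (Or.inr (by nlinarith)))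
    | exact Or.inr (Or.inr (Or.inl (by nlinarith)))
    | exact Or.inr (Or.inr (Or.inr (by nlinarith)))

theorem isTiling_tiles : IsTiling m.tiles := by
  have hH : ∀ X ∈ ({m.pentagon, m.rotatedPentagon} : Set (Set (ℝ × ℝ))), X ⊆ m.hexagon := by
    rintro _ (rfl | rfl)
    · exact m.pentagon_subset_hexagon
    · exact fun p hp => (m.rotatedPentagon_subset hp).1
  apply isTiling_latticeTiles
  · intro x
    obtain ⟨z, hz, hx⟩ := m.exists_sub_mem_hexagon x
    rcases m.hexagon_subset_union hx with h | h
    · exact ⟨z, hz, _, Or.inl rfl, h⟩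
    · exact ⟨z, hz, _, Or.inr rfl, h⟩
  · have := m.disjoint_interior_pentagon_rotatedPentagon
    exact pairwise_pair.mpr fun _ => ⟨this, this.symm⟩
  · rintro X hX Y hY z hz hz₀
    obtain ⟨k, l, rfl⟩ := mem_integerLattice.mp hz
    have hkl : (k, l) ≠ (0, 0) := by
      rintro ⟨⟩
      exact hz₀ (by simp)
    have hX' := hH X hX
    have hY' := hH Y hY
    have hα := m.α_pos
    rcases m.width_le_abs_det_of_ne_zero hkl with h | h | h
    · exact disjoint_interior_image_add_of_mapsTo_Icc _
        (det_ne_zero fun h => hα.ne' (Prod.mk_eq_zero.mp h).1)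
        (fun x hx => (hX' hx).1) (fun x hx => (hY' hx).1) (by linarith)
    · exact disjoint_interior_image_add_of_mapsTo_Icc _
        (det_ne_zero fun h => by linarith [m.α_add_β_lt_one, m.β_pos, (Prod.mk_eq_zero.mp h).1])
        (fun x hx => (hX' hx).2.1) (fun x hx => (hY' hx).2.1) (by linarith)
    · exact disjoint_interior_image_add_of_mapsTo_Icc _
        (det_ne_zero fun h => hα.ne' (Prod.mk_eq_zero.mp h).1)
        (fun x hx => (hX' hx).2.2) (fun x hx => (hY' hx).2.2) (by linarith)

end Model

theorem exists_model_affineEquiv_of_parallel {A B C D E : ℝ²} {μ : ℝ} (hμ₀ : 0 < μ) (hμ₁ : μ < 1)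
    (hDC : D - C = μ • (D - C + (E - A))) (c₀ : 0 < cross (B - A) (C - B))
    (c₁ : 0 < cross (C - B) (D - C)) (c₄ : 0 < cross (A - E) (B - A)) :
    ∃ (m : Model) (Φ : ℝ × ℝ ≃ᵃ[ℝ] ℝ²), ∀ i, Φ (m.vertex i) = ![A, B, C, D, E] i := by
  set w := D - C + (E - A) with hw
  have hAE : A - E = -((1 - μ) • w) := by
    rw [sub_smul, one_smul, ← hDC, hw]
    abel
  -- `t₁ = σ A - B` and `t₂ = σ C - B` for the half-turn `σ y = D + E - y`
  set t₁ := C - B + w with ht₁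
  set t₂ := A - B + w with ht₂
  have ha : 0 < cross w t₂ := by
    have h : cross (A - E) (B - A) = (1 - μ) * cross w t₂ := by
      simp only [hAE, ht₂, cross_apply, PiLp.add_apply, PiLp.sub_apply, PiLp.neg_apply,
        PiLp.smul_apply, smul_eq_mul]
      ring
    exact (mul_pos_iff_of_pos_left (by linarith)).mp (h ▸ c₄)
  have hb : 0 < cross t₁ w := by
    have h : cross (C - B) (D - C) = μ * cross t₁ w := by
      simp only [hDC, ht₁, cross_apply, PiLp.add_apply, PiLp.sub_apply, PiLp.smul_apply,
        smul_eq_mul]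
      ring
    exact (mul_pos_iff_of_pos_left hμ₀).mp (h ▸ c₁)
  have hK : cross t₁ t₂ = cross (B - A) (C - B) + cross t₁ w + cross w t₂ := by
    simp only [ht₁, ht₂, cross_apply, PiLp.add_apply, PiLp.sub_apply]
    ring
  set K := cross t₁ t₂
  have hK₀ : 0 < K := by rw [hK]; linarith
  have hwt : w = (cross w t₂ / K) • t₁ + (cross t₁ w / K) • t₂ := by
    rw [div_eq_inv_mul, div_eq_inv_mul, mul_smul, mul_smul, ← smul_add,
      ← cross_smul_add_cross_smul, smul_smul, inv_mul_cancel₀ hK₀.ne', one_smul]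
  obtain ⟨Φ, hΦ⟩ := exists_affineEquiv_eq_add_smul A hK₀.ne'
  refine ⟨⟨cross w t₂ / K, cross t₁ w / K, μ, by positivity, by positivity,
    by rw [← add_div, div_lt_one hK₀]; linarith, hμ₀, hμ₁⟩, Φ, fun i => ?_⟩
  fin_cases i <;>
    simp only [Model.vertex, Fin.zero_eta, Fin.mk_one, Fin.reduceFinMk, Matrix.cons_val,
      Matrix.cons_val_zero, Matrix.cons_val_one, hΦ]
  · linear_combination (norm := module)
  · linear_combination (norm := module) -hwt - ht₂
  · linear_combination (norm := module) ht₁ - ht₂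
  · linear_combination (norm := module) ht₁ - ht₂ - hDC - μ • hwt
  · linear_combination (norm := module) hAE - (1 - μ) • hwt

end TypeOnePentagon

namespace ConvexPentagon

open TypeOnePentagon

theorem exists_pos_smul_of_interiorAngle_add_eq_pi (P : ConvexPentagon)
    (hDE : P.interiorAngle 3 + P.interiorAngle 4 = π) :
    ∃ s : ℝ, 0 < s ∧ P.v 0 - P.v 4 = s • (P.v 2 - P.v 3) := by
  have hD : P.interiorAngle 3 = InnerProductGeometry.angle (P.v 2 - P.v 3) (P.v 4 - P.v 3) :=
    rfl
  have hE : P.interiorAngle 4 =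
      InnerProductGeometry.angle (-(P.v 4 - P.v 3)) (P.v 0 - P.v 4) := by
    rw [neg_sub]; rfl
  rw [hD, hE, InnerProductGeometry.angle_neg_left,
    InnerProductGeometry.angle_comm (P.v 2 - P.v 3)] at hDE
  have c₂ : 0 < cross (P.v 3 - P.v 2) (P.v 4 - P.v 3) := P.convex 2
  have c₃ : 0 < cross (P.v 4 - P.v 3) (P.v 0 - P.v 4) := P.convex 3
  refine exists_pos_smul_of_angle_eq (by linarith) ?_ c₃
  convert c₂ using 1
  simp only [cross_apply, PiLp.sub_apply]
  ring

theorem exists_model_affineEquiv (P : ConvexPentagon)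
    (hDE : P.interiorAngle 3 + P.interiorAngle 4 = π) :
    ∃ (m : Model) (Φ : ℝ × ℝ ≃ᵃ[ℝ] ℝ²), ∀ i, Φ (m.vertex i) = P.v i := by
  obtain ⟨s, hs, hpar⟩ := P.exists_pos_smul_of_interiorAngle_add_eq_pi hDE
  have hs₁ : 1 + s ≠ 0 := by positivity
  have hDC : P.v 3 - P.v 2 = (1 + s)⁻¹ • (P.v 3 - P.v 2 + (P.v 4 - P.v 0)) := by
    rw [← neg_sub (P.v 0), hpar, ← smul_neg, neg_sub, smul_add, smul_smul, ← add_smul,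
      show (1 + s)⁻¹ + (1 + s)⁻¹ * s = 1 by field_simp, one_smul]
  obtain ⟨m, Φ, hΦ⟩ := exists_model_affineEquiv_of_parallel (by positivity)
    (inv_lt_one_of_one_lt₀ (by linarith)) hDC (P.convex 0) (P.convex 1) (P.convex 4)
  exact ⟨m, Φ, fun i => (hΦ i).trans (by fin_cases i <;> rfl)⟩

section Tiles

variable {P : ConvexPentagon} {m : Model} {Φ : ℝ × ℝ ≃ᵃ[ℝ] ℝ²}

theorem image_pentagon (hΦ : ∀ i, Φ (m.vertex i) = P.v i) : Φ '' m.pentagon = P.region := by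
  rw [Model.pentagon, ← Φ.coe_toAffineMap, Φ.toAffineMap.image_convexHull, ← range_comp]
  exact congrArg _ (congrArg _ (funext hΦ))

theorem image_rotatedPentagon (hΦ : ∀ i, Φ (m.vertex i) = P.v i) :
    Φ '' m.rotatedPentagon = (P.v 3 + P.v 4 - ·) '' P.region := by
  rw [Model.rotatedPentagon, ← Φ.coe_toAffineMap, Φ.toAffineMap.image_image_add_sub,
    Φ.coe_toAffineMap, image_pentagon hΦ, hΦ, hΦ]

theorem exists_isometryEquiv_of_mem_image_tiles (hΦ : ∀ i, Φ (m.vertex i) = P.v i) {T : Set ℝ²}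
    (hT : T ∈ (Φ '' ·) '' m.tiles) : ∃ g : ℝ² ≃ᵢ ℝ², T = g '' P.region := by
  obtain ⟨_, ⟨X, hX, z, -, rfl⟩, rfl⟩ := hT
  dsimp only
  rw [← Φ.coe_toAffineMap, Φ.toAffineMap.image_image_add, Φ.coe_toAffineMap]
  rcases hX with rfl | rfl
  · exact ⟨IsometryEquiv.addRight (Φ.linear z), by rw [image_pentagon hΦ]; rfl⟩
  · exact ⟨(IsometryEquiv.subLeft (P.v 3 + P.v 4)).trans (IsometryEquiv.addRight (Φ.linear z)),
      by rw [image_rotatedPentagon hΦ, image_image]; rfl⟩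

end Tiles

end ConvexPentagon

end

open TypeOnePentagon

/-- Type 1 pentagons tile periodically: if the interior angles at the two
adjacent vertices `D` (index 3) and `E` (index 4) of a convex pentagon are
supplementary, then the plane can be tiled by congruent (isometric) copies of
the pentagon, and the tiling is periodic, i.e. invariant under translations by
two linearly independent vectors. -/
theorem type1_pentagon_tiles_periodically
    (P : ConvexPentagon)
    (hDE : P.interiorAngle 3 + P.interiorAngle 4 = π) :
    ∃ S : Set (Set (EuclideanSpace ℝ (Fin 2))),
      (∀ T ∈ S, ∃ g : EuclideanSpace ℝ (Fin 2) ≃ᵢ EuclideanSpace ℝ (Fin 2),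
        T = g '' P.region) ∧
      ⋃₀ S = Set.univ ∧
      (∀ T₁ ∈ S, ∀ T₂ ∈ S, T₁ ≠ T₂ → Disjoint (interior T₁) (interior T₂)) ∧
      ∃ t₁ t₂ : EuclideanSpace ℝ (Fin 2),
        LinearIndependent ℝ ![t₁, t₂] ∧
        (∀ T ∈ S, (fun x => x + t₁) '' T ∈ S) ∧
        (∀ T ∈ S, (fun x => x + t₂) '' T ∈ S) := by
  obtain ⟨m, Φ, hΦ⟩ := P.exists_model_affineEquiv hDE
  have hS := m.isTiling_tiles.image Φ.toContinuousAffineEquiv.toHomeomorph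
  have h₁ : ((1 : ℝ), (0 : ℝ)) ∈ integerLattice := mem_integerLattice.mpr ⟨1, 0, by simp⟩
  have h₂ : ((0 : ℝ), (1 : ℝ)) ∈ integerLattice := mem_integerLattice.mpr ⟨0, 1, by simp⟩
  exact ⟨(Φ '' ·) '' m.tiles, fun T hT => P.exists_isometryEquiv_of_mem_image_tiles hΦ hT,
    hS.1, fun T₁ hT₁ T₂ hT₂ => hS.2 hT₁ hT₂, Φ.linear (1, 0), Φ.linear (0, 1),
    Φ.linear.linearIndependent_apply_pair,
    Φ.toAffineMap.image_add_mem_image fun T hT => image_add_mem_latticeTiles h₁ hT,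
    Φ.toAffineMap.image_add_mem_image fun T hT => image_add_mem_latticeTiles h₂ hT⟩
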